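/- arXiv:1708.06583 — 2 statements merged into one kernel-verified Lean document; each statement's English description precedes it below -/
import Mathlib

section
/- Let G be a finite purely non-abelian group. Then for any m, t ∈ ℕ, any w ∈ Hom(G, Z(G)), any group homomorphisms f₁, …, f_m: Ẑ(G) → Z(G), and any bicharacters g₁, …, g_m: G → Ĝ, there is a unique z ∈ Hom(G, Z(G)) satisfying, for all x ∈ G, z(x) = w(x) · ∏_{s=1}^{t} ∏_{i=1}^{m} f_i( ζ_z^s( ρ(g_i(x)) ) ), where ζ_z: Ẑ(G) → Ẑ(G) is the endomorphism ζ_z(χ) = χ ∘ (z restricted to Z(G)) (i.e. ζ_z = ρ ∘ z*, the dual of z followed by restriction to the center) and ζ_z^s is its s-fold composite. -/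
/-!
For `z : G →* Z(G)` the restriction `z|_Z` is nilpotent: some power of it is idempotent, and an
idempotent endomorphism `π` of `G` with central image splits `G` as `im π × ker π`, so it is trivial
when `G` is purely non-abelian. Restrictions are closed under composition, hence by pigeonhole on
prefixes every composite of sufficiently many restrictions is trivial.

Let `Φ` be the map `z ↦ w · ∏ₛ ∏ᵢ fᵢ (ζ_zˢ (ρ ∘ gᵢ))`, so the solutions are its fixed points. By
telescoping `aˢ / bˢ`, the difference `Φ z₁ / Φ z₂` is built from `z₁ / z₂` by composing its
restriction with endomorphisms on both sides. If `z₁ / z₂` factors through a composite of `k`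
restrictions, this adds one restriction, but inside a character, i.e. on the dual side; one more
application of `Φ`, together with Pontryagin duality (transposing through the double dual), brings
the composite of `k + 1` restrictions back outside. So `Φ^[2n]` is constant for large `n`, and `Φ`
has exactly one fixed point.
-/

/-- A finite group `G` is purely non-abelian if it has no nontrivial abelian direct
factor: whenever `G` is the internal direct product of two normal subgroups `A` and `B`
with `A` abelian, `A` is trivial. -/
def PurelyNonAbelian (G : Type*) [Group G] : Prop :=
  ∀ A B : Subgroup G, A.Normal → B.Normal → IsCompl A B →
    (∀ a b : A, a * b = b * a) → A = ⊥

open scoped IsMulCommutative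

open Subgroup (center)

section FiniteMonoid

variable {M : Type*} [Monoid M]

theorem exists_isIdempotentElem_pow [Finite M] (a : M) : ∃ n ≠ 0, IsIdempotentElem (a ^ n) := by
  obtain ⟨m, n, hne, heq⟩ := Finite.exists_ne_map_eq_of_infinite (a ^ · : ℕ → M)
  wlog hlt : m < n generalizing m n
  · exact this n m hne.symm heq.symm (lt_of_le_of_ne (not_lt.1 hlt) hne.symm)
  have hshift : ∀ k, m ≤ k → a ^ (k + (n - m)) = a ^ k := fun k hk => by
    rw [show k + (n - m) = (k - m) + n by omega, pow_add, ← heq, ← pow_add, Nat.sub_add_cancel hk]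
  have hperiodic : ∀ j k, m ≤ k → a ^ (k + j * (n - m)) = a ^ k := by
    intro j
    induction j with
    | zero => simp
    | succ j ih =>
      intro k hk
      rw [Nat.succ_mul, ← add_assoc, hshift _ (by omega), ih k hk]
  -- a multiple of the period `n - m` lying beyond the preperiod `m`
  have hm : m ≤ (m + 1) * (n - m) := (Nat.le_succ m).trans (Nat.le_mul_of_pos_right _ (by omega))
  refine ⟨(m + 1) * (n - m), (Nat.mul_pos (by omega) (by omega)).ne', ?_⟩
  rw [IsIdempotentElem, ← pow_add, hperiodic _ _ hm]

theorem Subsemigroup.list_prod_mem {S : Subsemigroup M} {l : List M} (hl : l ≠ [])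
    (h : ∀ x ∈ l, x ∈ S) : l.prod ∈ S := by
  induction l with
  | nil => exact absurd rfl hl
  | cons a t ih =>
    rw [List.prod_cons]
    rcases eq_or_ne t [] with rfl | ht
    · simpa using h a (by simp)
    · exact S.mul_mem (h a (by simp)) (ih ht fun x hx => h x (by simp [hx]))

theorem Subsemigroup.exists_list_prod_eq [Finite M] (S : Subsemigroup M) {o : M}
    (ho : ∀ x, o * x = o ∧ x * o = o) (hS : ∀ s ∈ S, IsIdempotentElem s → s = o) :
    ∃ n, ∀ l : List M, (∀ x ∈ l, x ∈ S) → n ≤ l.length → l.prod = o := by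
  refine ⟨Nat.card M + 1, fun l hl hlen => ?_⟩
  obtain ⟨i, j, hij, hj, heq⟩ :
      ∃ i j : ℕ, i < j ∧ j ≤ Nat.card M ∧ (l.take i).prod = (l.take j).prod := by
    have : ¬ Function.Injective (fun i : Fin (Nat.card M + 1) => (l.take i).prod) := fun hinj => by
      simpa using Nat.card_le_card_of_injective _ hinj
    obtain ⟨i, j, heq, hne⟩ := Function.not_injective_iff.1 this
    rcases lt_or_gt_of_ne (Fin.val_ne_of_ne hne) with h | h
    · exact ⟨i, j, h, by omega, heq⟩
    · exact ⟨j, i, h, by omega, heq.symm⟩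
  set p := (l.take i).prod
  set q := ((l.drop i).take (j - i)).prod
  have hq : q ∈ S := by
    refine list_prod_mem ?_ fun x hx => hl x (List.mem_of_mem_drop (List.mem_of_mem_take hx))
    simp only [ne_eq, List.take_eq_nil_iff, List.drop_eq_nil_iff]
    omega
  have hpq : p * q = p := by
    rw [← List.prod_append, ← List.take_add, Nat.add_sub_cancel' hij.le]
    exact heq.symm
  obtain ⟨n, hn, hidem⟩ := exists_isIdempotentElem_pow q
  have hqn : q ^ n = o := by
    refine hS _ ?_ hidem
    rw [← List.prod_replicate]
    exact list_prod_mem (by simpa) fun x hx => (List.eq_of_mem_replicate hx) ▸ hq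
  have hp : p = o := by
    have hpow : ∀ k, p * q ^ k = p := fun k => by
      induction k with
      | zero => simp
      | succ k ih => rw [pow_succ, ← mul_assoc, ih, hpq]
    rw [← hpow n, hqn, (ho p).2]
  rw [← List.take_append_drop j l, List.prod_append, ← heq, hp, (ho _).1]

end FiniteMonoid

theorem PurelyNonAbelian.eq_one_of_comp_self {G : Type*} [Group G] (hG : PurelyNonAbelian G)
    {π : G →* G} (hπ : π.comp π = π) (hcen : π.range ≤ center G) : π = 1 := by
  have hfix : ∀ g, π (π g) = π g := DFunLike.congr_fun hπ
  have hnormal : π.range.Normal :=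
    ⟨fun x hx g => by rwa [Subgroup.mem_center_iff.1 (hcen hx) g, mul_inv_cancel_right]⟩
  have hcompl : IsCompl π.range π.ker := by
    refine ⟨Subgroup.disjoint_def.2 ?_, codisjoint_iff_le_sup.2 fun g _ => ?_⟩
    · rintro _ ⟨g, rfl⟩ hker
      rwa [← hfix]
    · rw [← mul_inv_cancel_left (π g) g]
      exact Subgroup.mul_mem_sup ⟨g, rfl⟩ (by simp [MonoidHom.mem_ker, hfix])
  have hcomm : ∀ a b : π.range, a * b = b * a := fun a b =>
    Subtype.ext (Subgroup.mem_center_iff.1 (hcen b.2) a)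
  exact MonoidHom.range_eq_bot_iff.1 (hG _ _ hnormal π.normal_ker hcompl hcomm)

theorem Subgroup.apply_pow_div_apply_pow_mem {M H : Type*} [Monoid M] [Group H] {Y : Subgroup H}
    {a b : M} (F : M → H) (hF : ∀ p q, F (p * a * q) / F (p * b * q) ∈ Y) (n : ℕ) :
    F (a ^ n) / F (b ^ n) ∈ Y := by
  induction n generalizing F with
  | zero => simp
  | succ n ih =>
    rw [pow_succ, pow_succ, ← div_mul_div_cancel _ (F (a ^ n * b))]
    refine Y.mul_mem (by simpa using hF (a ^ n) 1) (ih (fun m => F (m * b)) fun p q => ?_)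
    simpa only [mul_assoc] using hF p (q * b)

theorem Function.existsUnique_isFixedPt_of_iterate_eq {α : Type*} [Nonempty α] {f : α → α}
    {n : ℕ} (h : ∀ a b, f^[n] a = f^[n] b) : ∃! x, Function.IsFixedPt f x := by
  obtain ⟨a⟩ := ‹Nonempty α›
  refine ⟨f^[n] a, ?_, fun x hx => ?_⟩
  · change f (f^[n] a) = f^[n] a
    rw [← Function.iterate_succ_apply' f n a, Function.iterate_succ_apply, h]
  · rw [← Function.iterate_fixed hx n, h]

theorem Subgroup.iterate_div_mem {H : Type*} [Group H] {Ψ : H → H} {F : ℕ → Subgroup H}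
    (hΨ : ∀ k a b, a / b ∈ F k → Ψ a / Ψ b ∈ F (k + 1)) (h0 : F 0 = ⊤) (k : ℕ) (a b : H) :
    Ψ^[k] a / Ψ^[k] b ∈ F k := by
  induction k with
  | zero => simp [h0]
  | succ k ih =>
    rw [Function.iterate_succ_apply', Function.iterate_succ_apply']
    exact hΨ k _ _ ih

section Duality

variable {A R : Type*} [CommGroup A] [Finite A] [CommMonoid R]
  [HasEnoughRootsOfUnity R (Monoid.exponent A)]

noncomputable def MonoidHom.dualTranspose (φ : (A →* Rˣ) →* A) : (A →* Rˣ) →* A :=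
  (CommGroup.monoidHomMonoidHomEquiv A R).toMonoidHom.comp (MonoidHom.compHom' φ)

theorem MonoidHom.apply_dualTranspose (φ : (A →* Rˣ) →* A) (χ ξ : A →* Rˣ) :
    ξ (φ.dualTranspose χ) = χ (φ ξ) :=
  CommGroup.apply_monoidHomMonoidHomEquiv (G := A) (M := R) ξ _

end Duality

namespace CentralHom

variable {G : Type*} [Group G]

def restrict (z : G →* center G) : Monoid.End (center G) := z.comp (center G).subtype

def restrictions : Subsemigroup (Monoid.End (center G)) where
  carrier := Set.range restrict
  mul_mem' := by
    rintro _ _ ⟨a, rfl⟩ ⟨b, rfl⟩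
    exact ⟨(restrict a).comp b, rfl⟩

theorem restrict_apply_eq_one_of_isIdempotentElem (hG : PurelyNonAbelian G) {u : G →* center G}
    (hu : IsIdempotentElem (restrict u)) (y : center G) : restrict u y = 1 := by
  have hidem : ∀ y, restrict u (restrict u y) = restrict u y := DFunLike.congr_fun hu
  let π : G →* G := (center G).subtype.comp ((restrict u).comp u)
  have hπ : π.comp π = π := MonoidHom.ext fun g => congrArg Subtype.val <|
    show restrict u (restrict u (restrict u (u g))) = restrict u (u g) by rw [hidem, hidem]
  have hπ1 := hG.eq_one_of_comp_self hπ (by rintro _ ⟨g, rfl⟩; exact (restrict u (u g)).2)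
  calc restrict u y = restrict u (u y) := (hidem y).symm
    _ = 1 := Subtype.ext (DFunLike.congr_fun hπ1 (y : G))

def word (L : List (G →* center G)) : Monoid.End (center G) := (L.map restrict).prod

theorem word_append_singleton (L : List (G →* center G)) (u : G →* center G) :
    word (L ++ [u]) = word L * restrict u := by
  simp [word]

theorem exists_word_apply_eq_one [Finite (center G)] (hG : PurelyNonAbelian G) :
    ∃ n, ∀ L : List (G →* center G), n ≤ L.length → ∀ y, word L y = 1 := by
  have : Finite (Monoid.End (center G)) := Finite.of_injective _ DFunLike.coe_injective
  -- the zero is the trivial endomorphism, not `(1 : Monoid.End _)`, which is the identity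
  obtain ⟨n, hn⟩ := restrictions.exists_list_prod_eq (o := (1 : center G →* center G))
    (fun x => ⟨rfl, MonoidHom.comp_one x⟩) (by
      rintro _ ⟨u, rfl⟩ hu
      exact MonoidHom.ext (restrict_apply_eq_one_of_isIdempotentElem hG hu))
  refine ⟨n, fun L hL => DFunLike.congr_fun (hn (L.map restrict) ?_ (by simpa using hL))⟩
  simp only [List.mem_map]
  rintro _ ⟨u, -, rfl⟩
  exact ⟨u, rfl⟩

def restrictChar : (G →* ℂˣ) →* (center G →* ℂˣ) := MonoidHom.compHom' (center G).subtype

/-- `x ↦ φ (η x ∘ a)`, i.e. `φ ∘ a* ∘ η` where `a*` is the dual of `a`. -/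
def viaDual (φ : (center G →* ℂˣ) →* center G) (η : G →* (center G →* ℂˣ)) :
    (center G →* center G) →* (G →* center G) where
  toFun a := φ.comp ((MonoidHom.compHom' a).comp η)
  map_one' := MonoidHom.ext fun x => by
    change φ ((η x).comp 1) = 1
    rw [MonoidHom.comp_one, map_one]
  map_mul' a b := MonoidHom.ext fun x => by
    change φ ((η x).comp (a * b)) = φ ((η x).comp a) * φ ((η x).comp b)
    rw [MonoidHom.comp_mul, map_mul]

def sandwich (P Q : Monoid.End (center G)) : (G →* center G) →* (center G →* center G) :=
  (MonoidHom.compHom P).comp ((MonoidHom.compHom' Q).comp (MonoidHom.compHom' (center G).subtype))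

theorem sandwich_apply (P Q : Monoid.End (center G)) (d : G →* center G) :
    sandwich P Q d = P * restrict d * Q := rfl

def wordFactor (k : ℕ) : Subgroup (G →* center G) :=
  Subgroup.closure {d | ∃ (v : Monoid.End (center G)) (L : List (G →* center G))
    (u : G →* center G), L.length = k ∧ d = (v * word L).comp u}

def dualWordFactor (k : ℕ) : Subgroup (G →* center G) :=
  Subgroup.closure {d | ∃ (φ : (center G →* ℂˣ) →* center G) (η : G →* (center G →* ℂˣ))
    (L : List (G →* center G)), L.length = k ∧ d = viaDual φ η (word L)}

theorem wordFactor_zero : wordFactor (G := G) 0 = ⊤ :=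
  eq_top_iff.2 fun d _ => Subgroup.subset_closure ⟨1, [], d, rfl, rfl⟩

theorem exists_wordFactor_eq_bot [Finite (center G)] (hG : PurelyNonAbelian G) :
    ∃ n, wordFactor (G := G) n = ⊥ := by
  obtain ⟨n, hn⟩ := exists_word_apply_eq_one hG
  refine ⟨n, eq_bot_iff.2 <| (Subgroup.closure_le _).2 ?_⟩
  rintro _ ⟨v, L, u, hL, rfl⟩
  exact MonoidHom.ext fun x => by
    change v (word L (u x)) = 1
    rw [hn L hL.ge, map_one]

theorem viaDual_sandwich_mem_dualWordFactor {k : ℕ} {d : G →* center G} (hd : d ∈ wordFactor k)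
    (φ : (center G →* ℂˣ) →* center G) (η : G →* (center G →* ℂˣ)) (P Q : Monoid.End (center G)) :
    viaDual φ η (sandwich P Q d) ∈ dualWordFactor (k + 1) := by
  refine (Subgroup.closure_le ((dualWordFactor (k + 1)).comap
    ((viaDual φ η).comp (sandwich P Q)))).2 ?_ hd
  rintro _ ⟨v, L, u, rfl, rfl⟩
  refine Subgroup.subset_closure ⟨φ.comp (MonoidHom.compHom' Q),
    (MonoidHom.compHom' (P * v)).comp η, L ++ [u], by simp, ?_⟩
  rw [word_append_singleton]
  rfl

theorem viaDual_sandwich_mem_wordFactor [Finite (center G)] {k : ℕ} {d : G →* center G}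
    (hd : d ∈ dualWordFactor k)
    (φ : (center G →* ℂˣ) →* center G) (η : G →* (center G →* ℂˣ)) (P Q : Monoid.End (center G)) :
    viaDual φ η (sandwich P Q d) ∈ wordFactor k := by
  refine (Subgroup.closure_le ((wordFactor k).comap
    ((viaDual φ η).comp (sandwich P Q)))).2 ?_ hd
  rintro _ ⟨ψ, ξ, L, rfl, rfl⟩
  refine Subgroup.subset_closure
    ⟨φ.comp ((MonoidHom.compHom' Q).comp (ξ.comp (center G).subtype).flip), L,
      ψ.dualTranspose.comp ((MonoidHom.compHom' P).comp η), rfl, ?_⟩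
  refine MonoidHom.ext fun x => congrArg φ (MonoidHom.ext fun y => ?_)
  exact (ψ.apply_dualTranspose ((η x).comp P) ((ξ (Q y)).comp (word L))).symm

variable {m : ℕ} (w : G →* center G) (f : Fin m → ((center G →* ℂˣ) →* center G))
  (g : Fin m → (G →* (G →* ℂˣ))) (t : ℕ)

/-- The powers `restrict z ^ s` are taken in `Monoid.End`, i.e. under composition. -/
def recursionMap (z : G →* center G) : G →* center G :=
  w * ∏ s ∈ Finset.Icc 1 t, ∏ i, viaDual (f i) (restrictChar.comp (g i))
    (restrict z ^ s : Monoid.End (center G))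

theorem iterate_comp_restrict (z : G →* center G) (s : ℕ) (χ : center G →* ℂˣ) :
    (fun χ : center G →* ℂˣ => χ.comp (z.comp (center G).subtype))^[s] χ
      = χ.comp (restrict z ^ s : Monoid.End (center G)) := by
  induction s generalizing χ with
  | zero => rfl
  | succ s ih => rw [Function.iterate_succ_apply, ih, pow_succ']; rfl

theorem recursionMap_apply (z : G →* center G) (x : G) :
    recursionMap w f g t z x = w x * ∏ s ∈ Finset.Icc 1 t, ∏ i : Fin m,
      f i ((fun χ : center G →* ℂˣ => χ.comp (z.comp (center G).subtype))^[s]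
        ((g i x).comp (center G).subtype)) := by
  simp only [recursionMap, MonoidHom.mul_apply, MonoidHom.finsetProd_apply, iterate_comp_restrict]
  rfl

theorem recursionMap_div_mem {Y : Subgroup (G →* center G)} {z₁ z₂ : G →* center G}
    (h : ∀ i P Q, viaDual (f i) (restrictChar.comp (g i)) (sandwich P Q (z₁ / z₂)) ∈ Y) :
    recursionMap w f g t z₁ / recursionMap w f g t z₂ ∈ Y := by
  rw [recursionMap, recursionMap, mul_div_mul_left_eq_div, ← Finset.prod_div_distrib]
  refine Y.prod_mem fun s _ => ?_
  rw [← Finset.prod_div_distrib]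
  refine Y.prod_mem fun i _ => Subgroup.apply_pow_div_apply_pow_mem
    (fun a : Monoid.End (center G) => viaDual (f i) (restrictChar.comp (g i)) a) (fun P Q => ?_) s
  rw [← sandwich_apply, ← sandwich_apply, ← map_div, ← map_div]
  exact h i P Q

theorem recursionMap_div_mem_dualWordFactor {k : ℕ} {z₁ z₂ : G →* center G}
    (h : z₁ / z₂ ∈ wordFactor k) :
    recursionMap w f g t z₁ / recursionMap w f g t z₂ ∈ dualWordFactor (k + 1) :=
  recursionMap_div_mem w f g t fun _ _ _ => viaDual_sandwich_mem_dualWordFactor h _ _ _ _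

theorem recursionMap_div_mem_wordFactor [Finite (center G)] {k : ℕ} {z₁ z₂ : G →* center G}
    (h : z₁ / z₂ ∈ dualWordFactor k) :
    recursionMap w f g t z₁ / recursionMap w f g t z₂ ∈ wordFactor k :=
  recursionMap_div_mem w f g t fun _ _ _ => viaDual_sandwich_mem_wordFactor h _ _ _ _

end CentralHom

/-- Let `G` be a finite purely non-abelian group.  Then for any `m, t ∈ ℕ`,
`w ∈ Hom(G, Z(G))`, homomorphisms `f i : Ẑ(G) → Z(G)` and bicharacters `g i : G → Ĝ`,
there is a unique `z ∈ Hom(G, Z(G))` with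
`z x = w x · ∏_{s=1}^{t} ∏_{i=1}^{m} f i (ζ_z^s (ρ (g i x)))`, where
`ζ_z(χ) = χ ∘ (z restricted to Z(G))` and `ρ` is restriction of characters to `Z(G)`. -/
theorem exists_unique_recursion (G : Type*) [Group G] [Finite G]
    (hG : PurelyNonAbelian G) (m t : ℕ)
    (w : G →* Subgroup.center G)
    (f : Fin m → ((Subgroup.center G →* ℂˣ) →* Subgroup.center G))
    (g : Fin m → (G →* (G →* ℂˣ))) :
    ∃! z : G →* Subgroup.center G, ∀ x : G,
      z x = w x * ∏ s ∈ Finset.Icc 1 t, ∏ i : Fin m,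
        f i ((fun χ : Subgroup.center G →* ℂˣ =>
            χ.comp (z.comp (Subgroup.center G).subtype))^[s]
          ((g i x).comp (Subgroup.center G).subtype)) := by
  open CentralHom in
  obtain ⟨n, hn⟩ := exists_wordFactor_eq_bot hG
  have hconst : ∀ a b, (recursionMap w f g t)^[2 * n] a = (recursionMap w f g t)^[2 * n] b :=
    fun a b => by
      have h := Subgroup.iterate_div_mem (Ψ := (recursionMap w f g t)^[2]) (fun k a b h =>
        recursionMap_div_mem_wordFactor w f g t (recursionMap_div_mem_dualWordFactor w f g t h))
        wordFactor_zero n a b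
      rwa [hn, Subgroup.mem_bot, div_eq_one, ← Function.iterate_mul] at h
  have hfix : ∀ z, Function.IsFixedPt (recursionMap w f g t) z ↔
      ∀ x, z x = recursionMap w f g t z x := fun z => by
    rw [Function.IsFixedPt, MonoidHom.ext_iff]
    exact forall_congr' fun x => eq_comm
  simpa only [hfix, recursionMap_apply] using Function.existsUnique_isFixedPt_of_iterate_eq hconst
end

section
/- Let G be a finite purely non-abelian group, let w ∈ Hom(G, Z(G)), let p: Ẑ(G) → Z(G) be a group homomorphism, and let r: G → Ĝ be a bicharacter. Then there exists a central automorphism δ ∈ Aut_c(G) satisfying δ(x) = x · w(x) · p( ρ( r(x) ∘ δ⁻¹ ) ) for all x ∈ G (i.e. δ = 1 + w + p(δ⁻¹)*r in the convolution notation, with implicit restrictions of characters to the center given by ρ). -/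
/-!
Since `G` is finite and purely non-abelian, every endomorphism of `G` with central image is
nilpotent: some power of it is idempotent, and an idempotent one with central image splits off
its (abelian) image as a direct factor. Hence `δ_f : x ↦ x f(x)` is a central automorphism for
every `f ∈ Hom(G, Z(G))`, and it suffices to find `f` with `f / p ∘ ρ(r ∘ δ_f⁻¹) = w`. The left
side is a self-map of the finite set `Hom(G, Z(G))`, so it is enough that it is injective. If
`f₁, f₂` have the same image, then `γ = δ₁⁻¹ / δ₂⁻¹` on `Z(G)` satisfies `γ z = c (s z ∘ γ)`
for suitable `c, s`; by double duality of `Z(G)` the image of `γ` lies in its own image under a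
central endomorphism of `G`, which is nilpotent. So `γ = 1`, and then `f₁ = f₂`.
-/

open Subgroup Function

theorem exists_ne_zero_isIdempotentElem_pow {M : Type*} [Monoid M] [Finite M] (a : M) :
    ∃ n ≠ 0, IsIdempotentElem (a ^ n) := by
  obtain ⟨i, j, hne, hij⟩ := Finite.exists_ne_map_eq_of_infinite (a ^ · : ℕ → M)
  wlog hlt : i < j generalizing i j
  · exact this j i hne.symm hij.symm (hne.lt_or_gt.resolve_left hlt)
  obtain ⟨k, rfl⟩ := Nat.exists_eq_add_of_lt hlt
  have hperiod : ∀ t, a ^ i * a ^ ((k + 1) * t) = a ^ i := by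
    intro t
    induction t with
    | zero => simp
    | succ t ih =>
      rw [mul_add_one, pow_add, ← mul_assoc, ih, ← pow_add, ← add_assoc]
      exact hij.symm
  refine ⟨(k + 1) * (i + 1), by positivity, ?_⟩
  have hle : i ≤ (k + 1) * (i + 1) := by nlinarith
  obtain ⟨m, hm⟩ := Nat.exists_eq_add_of_le hle
  have hsplit : a ^ ((k + 1) * (i + 1)) = a ^ m * a ^ i := by rw [hm, add_comm, pow_add]
  rw [IsIdempotentElem]
  nth_rw 1 [hsplit]
  rw [mul_assoc, hperiod, ← hsplit]

section PurelyNonAbelian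

variable {G : Type*} [Group G]

theorem PurelyNonAbelian.eq_one_of_comp_self_s11 (hG : PurelyNonAbelian G) {e : G →* G}
    (hc : ∀ x, e x ∈ center G) (he : e.comp e = e) (x : G) : e x = 1 := by
  have hidem (x : G) : e (e x) = e x := DFunLike.congr_fun he x
  have hnormal : e.range.Normal := ⟨by
    rintro _ ⟨y, rfl⟩ g
    rw [mem_center_iff.mp (hc y) g, mul_inv_cancel_right]
    exact ⟨y, rfl⟩⟩
  have hcompl : IsCompl e.range e.ker := by
    refine ⟨disjoint_def.mpr ?_, codisjoint_iff.mpr (eq_top_iff.mpr fun x _ ↦ ?_)⟩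
    · rintro _ ⟨y, rfl⟩ hy
      rwa [MonoidHom.mem_ker, hidem] at hy
    · rw [← mul_inv_cancel_left (e x) x]
      exact mul_mem_sup ⟨x, rfl⟩ (by simp [hidem])
  have hcomm : ∀ a b : e.range, a * b = b * a := by
    rintro ⟨_, y, rfl⟩ ⟨_, y', rfl⟩
    exact Subtype.ext (mem_center_iff.mp (hc y') (e y))
  have hbot := hG _ _ hnormal e.normal_ker hcompl hcomm
  have hx : e x ∈ e.range := ⟨x, rfl⟩
  rwa [hbot, mem_bot] at hx

theorem PurelyNonAbelian.exists_iterate_eq_one [Finite G] (hG : PurelyNonAbelian G)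
    {e : G →* G} (hc : ∀ x, e x ∈ center G) : ∃ n, ∀ x, e^[n] x = 1 := by
  have : Finite (Monoid.End G) := .of_injective _ DFunLike.coe_injective
  obtain ⟨E, hE⟩ : ∃ E : Monoid.End G, ⇑E = ⇑e := ⟨e, rfl⟩
  obtain ⟨n, hn, hidem⟩ := exists_ne_zero_isIdempotentElem_pow E
  have hc' (x : G) : (E ^ n) x ∈ center G := by
    obtain ⟨m, rfl⟩ := Nat.exists_eq_succ_of_ne_zero hn
    rw [Monoid.End.coe_pow, iterate_succ_apply', hE]
    exact hc _
  refine ⟨n, fun x ↦ ?_⟩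
  rw [← hE, ← Monoid.End.coe_pow]
  exact hG.eq_one_of_comp_self_s11 hc' hidem x

theorem PurelyNonAbelian.subset_one_of_subset_image [Finite G] (hG : PurelyNonAbelian G)
    {e : G →* G} (hc : ∀ x, e x ∈ center G) {S : Set G} (hS : S ⊆ e '' S) : S ⊆ {1} := by
  obtain ⟨n, hn⟩ := hG.exists_iterate_eq_one hc
  have hiter : ∀ k, S ⊆ e^[k] '' S := by
    intro k
    induction k with
    | zero => simp
    | succ k ih =>
      rw [iterate_succ', Set.image_comp]
      exact hS.trans (Set.image_mono ih)
  rintro x hx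
  obtain ⟨y, -, rfl⟩ := hiter n hx
  exact hn y

end PurelyNonAbelian

-- provides the `CommGroup` structure on `center G`, hence on `G →* center G`
open scoped IsMulCommutative

section CentralAut

variable {G : Type*} [Group G]

def centralEnd (f : G →* center G) : G →* G where
  toFun x := x * f x
  map_one' := by simp
  map_mul' x y := by
    rw [map_mul, coe_mul, mul_assoc x y, ← mul_assoc y, mem_center_iff.mp (f x).2 y]
    simp only [mul_assoc]

theorem PurelyNonAbelian.centralEnd_injective [Finite G] (hG : PurelyNonAbelian G)
    (f : G →* center G) : Injective (centralEnd f) := by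
  rw [injective_iff_map_eq_one]
  intro x hx
  set e := (center G).subtype.comp f
  have hex : e x = x⁻¹ := (eq_inv_of_mul_eq_one_right hx)
  have hperiodic : IsPeriodicPt e 2 x := by
    rw [IsPeriodicPt, IsFixedPt, iterate_succ_apply', iterate_one, hex, map_inv, hex, inv_inv]
  obtain ⟨n, hn⟩ := hG.exists_iterate_eq_one (e := e) fun y ↦ (f y).2
  rw [← (hperiodic.mul_const n).eq, two_mul, iterate_add_apply, hn]

noncomputable def centralAut [Finite G] (hG : PurelyNonAbelian G) (f : G →* center G) :
    MulAut G :=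
  .ofBijective (centralEnd f) (Finite.injective_iff_bijective.mp (hG.centralEnd_injective f))

variable [Finite G] (hG : PurelyNonAbelian G)

theorem centralAut_apply (f : G →* center G) (x : G) : centralAut hG f x = x * f x := rfl

theorem centralAut_apply_mul_inv (f : G →* center G) (x : G) :
    centralAut hG f x * x⁻¹ = f x := by
  rw [centralAut_apply, mem_center_iff.mp (f x).2, mul_inv_cancel_right]

theorem centralAut_symm_mul_inv_symm (f₁ f₂ : G →* center G) (y : G) :
    (centralAut hG f₁).symm y * ((centralAut hG f₂).symm y)⁻¹ =
      (centralAut hG f₁).symm ((f₂ / f₁) ((centralAut hG f₂).symm y)) := by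
  set b := (centralAut hG f₂).symm y
  apply (centralAut hG f₁).injective
  have hy : y = b * f₂ b := by rw [← centralAut_apply hG, MulEquiv.apply_symm_apply]
  rw [map_mul, map_inv, MulEquiv.apply_symm_apply, MulEquiv.apply_symm_apply, centralAut_apply, hy]
  calc b * f₂ b * (b * f₁ b)⁻¹ = b * ↑((f₂ / f₁) b) * b⁻¹ := by simp [mul_assoc, div_eq_mul_inv]
    _ = _ := by rw [mem_center_iff.mp ((f₂ / f₁) b).2 b, mul_inv_cancel_right]

end CentralAut

theorem range_subset_image_flip_of_forall_apply_eq {A B M : Type*} [CommGroup A] [Finite A]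
    [Group B] [CommMonoid M] [HasEnoughRootsOfUnity M (Monoid.exponent A)] (ι : A →* B)
    (s : A →* B →* Mˣ) (c : (A →* Mˣ) →* A) {γ : A →* A}
    (hγ : ∀ z, γ z = c ((s z).comp (ι.comp γ))) :
    Set.range (ι.comp γ) ⊆ ι.comp (c.comp s.flip) '' Set.range (ι.comp γ) := by
  rintro _ ⟨z, rfl⟩
  set z₀ := CommGroup.monoidHomMonoidHomEquiv A M ((s z).comp (ι.comp c))
  have hflip : (s z).comp (ι.comp γ) = s.flip (ι (γ z₀)) := by
    ext1 z'
    simp only [MonoidHom.comp_apply, MonoidHom.flip_apply]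
    rw [hγ z']
    exact (CommGroup.apply_monoidHomMonoidHomEquiv M ((s z').comp (ι.comp γ))
      ((s z).comp (ι.comp c))).symm
  exact ⟨ι (γ z₀), ⟨z₀, rfl⟩, by simp [hγ z, hflip]⟩

section Twist

variable {G : Type*} [Group G]

def restrictTwist {M : Type*} [CommMonoid M] (r : G →* G →* M) :
    (center G →* center G) →* G →* center G →* M where
  toFun ψ := (MonoidHom.compHom' ((center G).subtype.comp ψ)).comp r
  map_one' := by ext; simp
  map_mul' ψ₁ ψ₂ := by ext; simp

variable [Finite G] (hG : PurelyNonAbelian G)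

noncomputable def centralAutSymmCenter (f : G →* center G) : center G →* center G :=
  (centerCongr (centralAut hG f).symm).toMonoidHom

variable (p : (center G →* ℂˣ) →* center G) (r : G →* G →* ℂˣ)

/-- `centralAut hG f` solves the equation of the theorem exactly when `twistMap hG p r f = w`. -/
noncomputable def twistMap (f : G →* center G) : G →* center G :=
  f * (p.comp (restrictTwist r (centralAutSymmCenter hG f)))⁻¹

theorem div_eq_of_twistMap_eq {f₁ f₂ : G →* center G}
    (h : twistMap hG p r f₁ = twistMap hG p r f₂) :
    f₁ / f₂ =
      p.comp (restrictTwist r (centralAutSymmCenter hG f₁ / centralAutSymmCenter hG f₂)) := by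
  rw [map_div, MonoidHom.comp_div]
  rw [twistMap, twistMap, ← div_eq_mul_inv, ← div_eq_mul_inv] at h
  exact div_eq_div_iff_div_eq_div.mp h

theorem twistMap_injective : Injective (twistMap hG p r) := by
  intro f₁ f₂ h
  have hd := div_eq_of_twistMap_eq hG p r h
  set ψ₁ := centralAutSymmCenter hG f₁
  set ψ₂ := centralAutSymmCenter hG f₂
  set γ := ψ₁ / ψ₂
  set ι := (center G).subtype
  set c : (center G →* ℂˣ) →* center G := (ψ₁.comp p)⁻¹
  set s : center G →* G →* ℂˣ := r.comp (ι.comp ψ₂)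
  have hγ (z : center G) : γ z = c ((s z).comp (ι.comp γ)) := by
    have hX : p ((s z).comp (ι.comp γ)) = (f₁ / f₂) (ψ₂ z) := by rw [hd]; rfl
    apply Subtype.ext
    rw [MonoidHom.inv_apply, MonoidHom.comp_apply, hX, ← map_inv, ← MonoidHom.inv_apply, inv_div]
    rw [MonoidHom.div_apply, div_eq_mul_inv, coe_mul, coe_inv]
    exact centralAut_symm_mul_inv_symm hG f₁ f₂ z
  -- yields `HasEnoughRootsOfUnity ℂ (Monoid.exponent (center G))`
  have : NeZero (Monoid.exponent (center G) : ℂ) :=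
    ⟨Nat.cast_ne_zero.mpr Monoid.exponent_ne_zero_of_finite⟩
  have hγ1 : γ = 1 := by
    have := hG.subset_one_of_subset_image (e := ι.comp (c.comp s.flip)) (fun x ↦ (c _).2)
      (range_subset_image_flip_of_forall_apply_eq ι s c hγ)
    ext z
    exact this ⟨z, rfl⟩
  rw [hγ1, map_one, MonoidHom.comp_one] at hd
  exact div_eq_one.mp hd

end Twist

/-- If `G` is finite purely non-abelian, `w ∈ Hom(G, Z(G))`, `p : Ẑ(G) → Z(G)` a
homomorphism and `r : G → Ĝ` a bicharacter, then there is a central automorphism `δ`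
satisfying `δ(x) = x · w(x) · p(ρ(r(x) ∘ δ⁻¹))` for all `x`. -/
theorem exists_central_aut_with_twist (G : Type*) [Group G] [Finite G]
    (hG : PurelyNonAbelian G)
    (w : G →* Subgroup.center G)
    (p : (Subgroup.center G →* ℂˣ) →* Subgroup.center G)
    (r : G →* (G →* ℂˣ)) :
    ∃ δ : MulAut G, (∀ g : G, δ g * g⁻¹ ∈ Subgroup.center G) ∧
      ∀ x : G, δ x = x * (w x : G) *
        (p (((r x).comp δ.symm.toMonoidHom).comp (Subgroup.center G).subtype) : G) := by
  have : Finite (G →* center G) := .of_injective _ DFunLike.coe_injective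
  obtain ⟨f, hf⟩ := Finite.injective_iff_surjective.mp (twistMap_injective hG p r) w
  refine ⟨centralAut hG f, fun g ↦ by simp [centralAut_apply_mul_inv], fun x ↦ ?_⟩
  have hfx := DFunLike.congr_fun (mul_inv_eq_iff_eq_mul.mp hf) x
  rw [centralAut_apply, hfx, MonoidHom.mul_apply, coe_mul, mul_assoc]
  rfl
end
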